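/- Let π ∈ ℝ^n have positive entries with ∑_j π_j ≤ 1, and let 1 ≤ k ≤ n. Among all probability vectors α ∈ ℝ^n with nonnegative entries, support of size at most k, and ∑_j α_j = 1, the minimum of KL(α‖π) = ∑_{j: α_j>0} α_j log(α_j/π_j) is attained by choosing T to be a set of indices of the k largest entries of π and setting α_j = π_j / (∑_{l∈T} π_l) for j ∈ T and α_j = 0 otherwise; the minimal value equals −log(∑_{j∈T} π_j). -/

import Mathlib

open Finset Real

/-! For a support `B` of size at most `k`, Jensen's inequality for `log` gives
`KL(β‖p) ≥ -log (∑_{j∈B} p j)`, with equality for `β = p / ∑_B p`; and the mass `∑_B p` is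
largest when `B` consists of the `k` largest entries of `p`. -/

variable {ι : Type*}

/-- Exchange argument: every index of `B \ T` is dominated by every index of the (at least as
large) set `T \ B`. -/
lemma sum_le_sum_of_card_le_of_forall_le [DecidableEq ι] {p : ι → ℝ} (hp : ∀ j, 0 ≤ p j)
    {T B : Finset ι} (hcard : #B ≤ #T) (hTtop : ∀ j ∈ T, ∀ j' ∉ T, p j' ≤ p j) :
    ∑ j ∈ B, p j ≤ ∑ j ∈ T, p j := by
  have hcard_sdiff : #(B \ T) ≤ #(T \ B) := by
    have hB := card_sdiff_add_card_inter B T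
    have hT := card_sdiff_add_card_inter T B
    rw [inter_comm] at hT
    omega
  have hsdiff : ∑ j ∈ B \ T, p j ≤ ∑ j ∈ T \ B, p j := by
    rcases (B \ T).eq_empty_or_nonempty with hBT | hBT
    · simpa [hBT] using sum_nonneg fun j _ => hp j
    obtain ⟨m, hm, hm_min⟩ :=
      exists_min_image (T \ B) p (card_pos.mp (hBT.card_pos.trans_le hcard_sdiff))
    calc ∑ j ∈ B \ T, p j ≤ #(B \ T) • p m :=
          sum_le_card_nsmul _ _ _ fun j hj => hTtop m (mem_sdiff.mp hm).1 j (mem_sdiff.mp hj).2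
      _ ≤ #(T \ B) • p m := nsmul_le_nsmul_left (hp m) hcard_sdiff
      _ ≤ ∑ j ∈ T \ B, p j := card_nsmul_le_sum _ _ _ hm_min
  have hB := sum_inter_add_sum_sdiff B T p
  have hT := sum_inter_add_sum_sdiff T B p
  rw [inter_comm] at hT
  linarith

lemma neg_log_sum_le_sum_mul_log_div (s : Finset ι) {β p : ι → ℝ} (hp : ∀ j ∈ s, 0 < p j)
    (hβ : ∀ j ∈ s, 0 < β j) (hβs : ∑ j ∈ s, β j = 1) :
    -log (∑ j ∈ s, p j) ≤ ∑ j ∈ s, β j * log (β j / p j) := by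
  have jensen := strictConcaveOn_log_Ioi.concaveOn.le_map_sum (t := s) (w := β)
    (p := fun j => p j / β j) (fun j hj => (hβ j hj).le) hβs
    (fun j hj => Set.mem_Ioi.mpr (div_pos (hp j hj) (hβ j hj)))
  have hweight : ∀ j ∈ s, β j • (p j / β j) = p j := fun j hj => by
    rw [smul_eq_mul, mul_div_cancel₀ _ (hβ j hj).ne']
  have hterm : ∀ j ∈ s, β j • log (p j / β j) = -(β j * log (β j / p j)) := fun j _ => by
    rw [smul_eq_mul, ← inv_div, log_inv, mul_neg]
  rw [sum_congr rfl hweight, sum_congr rfl hterm, sum_neg_distrib] at jensen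
  linarith

lemma sum_mul_log_div_of_eq_div_sum [Fintype ι] {p α : ι → ℝ} {T : Finset ι}
    (hp : ∀ j ∈ T, p j ≠ 0) (hαT : ∀ j ∈ T, α j = p j / ∑ l ∈ T, p l)
    (hα0 : ∀ j ∉ T, α j = 0) :
    ∑ j, α j * log (α j / p j) = -log (∑ j ∈ T, p j) := by
  set S := ∑ l ∈ T, p l
  have hterm : ∀ j ∈ T, α j * log (α j / p j) = p j / S * -log S := fun j hj => by
    rw [hαT j hj, div_div_cancel_left' (hp j hj), log_inv]
  rw [← sum_subset (subset_univ T) fun j _ hj => by rw [hα0 j hj, zero_mul],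
    sum_congr rfl hterm, ← sum_mul, ← sum_div]
  -- with the junk value `log 0 = 0` the case `S = 0` holds too
  rcases eq_or_ne S 0 with hS | hS
  · simp [hS]
  · rw [div_self hS, one_mul]

theorem sparse_kl_projection_general (n k : ℕ)
    (p : Fin n → ℝ) (hp : ∀ j, 0 < p j)
    (T : Finset (Fin n)) (hTcard : T.card = k)
    (hTtop : ∀ j ∈ T, ∀ j' ∉ T, p j' ≤ p j)
    (α : Fin n → ℝ)
    (hαT : ∀ j ∈ T, α j = p j / ∑ l ∈ T, p l)
    (hα0 : ∀ j ∉ T, α j = 0) :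
    (∀ β : Fin n → ℝ, (∀ j, 0 ≤ β j) →
      ({j : Fin n | β j ≠ 0} : Set (Fin n)).ncard ≤ k → ∑ j, β j = 1 →
      ∑ j, α j * Real.log (α j / p j) ≤ ∑ j, β j * Real.log (β j / p j)) ∧
    ∑ j, α j * Real.log (α j / p j) = - Real.log (∑ j ∈ T, p j) := by
  have hval := sum_mul_log_div_of_eq_div_sum (fun j _ => (hp j).ne') hαT hα0
  refine ⟨fun β hβ hβcard hβsum => ?_, hval⟩
  set B := univ.filter (β · ≠ 0)
  rw [← coe_filter_univ, Set.ncard_coe_finset] at hβcard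
  have hβB : ∑ j ∈ B, β j = 1 := by rw [sum_filter_ne_zero, hβsum]
  have hpB : 0 < ∑ j ∈ B, p j :=
    sum_pos (fun j _ => hp j) (nonempty_of_sum_ne_zero (hβB.trans_ne one_ne_zero))
  have hBT : ∑ j ∈ B, p j ≤ ∑ j ∈ T, p j :=
    sum_le_sum_of_card_le_of_forall_le (fun j => (hp j).le) (hTcard ▸ hβcard) hTtop
  calc ∑ j, α j * log (α j / p j) ≤ -log (∑ j ∈ B, p j) := by
        rw [hval]; exact neg_le_neg (log_le_log hpB hBT)
    _ ≤ ∑ j ∈ B, β j * log (β j / p j) :=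
        neg_log_sum_le_sum_mul_log_div B (fun j _ => hp j)
          (fun j hj => (hβ j).lt_of_ne' (mem_filter.mp hj).2) hβB
    _ = ∑ j, β j * log (β j / p j) :=
        sum_filter_of_ne fun j _ h => left_ne_zero_of_mul h

/-- Among sparse probability vectors with support of size at most `k`, the KL
divergence to a positive vector `p` (with total mass at most 1) is minimized by
renormalizing `p` on a set `T` of indices of the `k` largest entries of `p`,
and the minimal value is `-log (∑_{j∈T} p j)`. -/
theorem sparse_kl_projection (n k : ℕ) (hk1 : 1 ≤ k) (hkn : k ≤ n)
    (p : Fin n → ℝ) (hp : ∀ j, 0 < p j) (hpsum : ∑ j, p j ≤ 1)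
    (T : Finset (Fin n)) (hTcard : T.card = k)
    (hTtop : ∀ j ∈ T, ∀ j' ∉ T, p j' ≤ p j)
    (α : Fin n → ℝ)
    (hαT : ∀ j ∈ T, α j = p j / ∑ l ∈ T, p l)
    (hα0 : ∀ j ∉ T, α j = 0) :
    (∀ β : Fin n → ℝ, (∀ j, 0 ≤ β j) →
      ({j : Fin n | β j ≠ 0} : Set (Fin n)).ncard ≤ k → ∑ j, β j = 1 →
      ∑ j, α j * Real.log (α j / p j) ≤ ∑ j, β j * Real.log (β j / p j)) ∧
    ∑ j, α j * Real.log (α j / p j) = - Real.log (∑ j ∈ T, p j) :=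
  sparse_kl_projection_general n k p hp T hTcard hTtop α hαT hα0
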